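/- Let Λ be a finitely aligned P-graph and λ ∈ Λ. If U is an ultrafilter with r(U) = s(λ), then λ·U is an ultrafilter; and if V is an ultrafilter containing λ, then λ*·V is an ultrafilter. -/

import Mathlib

universe u

/-- A quasi-lattice ordered group in the sense of Nica: a (discrete) group `G` together
with a subsemigroup `P` containing the identity with `P ∩ P⁻¹ = {1}`, such that under the
partial order `p ≤ q ↔ p⁻¹ * q ∈ P`, any pair of elements of `G` with a common upper bound
in `P` has a least common upper bound in `P`. -/
structure QLOGroup (G : Type u) [Group G] where
  P : Set G
  one_mem : (1 : G) ∈ P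
  mul_mem : ∀ {p q : G}, p ∈ P → q ∈ P → p * q ∈ P
  eq_one_of_mem_inv_mem : ∀ p : G, p ∈ P → p⁻¹ ∈ P → p = 1
  lub_exists : ∀ p q : G, (∃ r ∈ P, p⁻¹ * r ∈ P ∧ q⁻¹ * r ∈ P) →
    ∃ r ∈ P, p⁻¹ * r ∈ P ∧ q⁻¹ * r ∈ P ∧
      ∀ s ∈ P, p⁻¹ * s ∈ P → q⁻¹ * s ∈ P → r⁻¹ * s ∈ P

namespace QLOGroup

variable {G : Type u} [Group G]

/-- The left-invariant partial order on `G` induced by `P`. -/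
def le (Q : QLOGroup G) (p q : G) : Prop := p⁻¹ * q ∈ Q.P

/-- `s` is the least common upper bound in `P` of `p` and `q` (i.e. `s = p ∨ q < ∞`). -/
def IsLub (Q : QLOGroup G) (p q s : G) : Prop :=
  s ∈ Q.P ∧ Q.le p s ∧ Q.le q s ∧ ∀ t ∈ Q.P, Q.le p t → Q.le q t → Q.le s t

/-- `s` is the least upper bound in `P` of the set `A` (i.e. `s = ∨A < ∞`). -/
def IsLubSet (Q : QLOGroup G) (A : Set G) (s : G) : Prop :=
  s ∈ Q.P ∧ (∀ a ∈ A, Q.le a s) ∧ ∀ t ∈ Q.P, (∀ a ∈ A, Q.le a t) → Q.le s t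

/-- `p` and `q` have a common upper bound in `P` (i.e. `p ∨ q < ∞`). -/
def HasLub (Q : QLOGroup G) (p q : G) : Prop := ∃ s, Q.IsLub p q s

/-- A subset `F` is `∨`-closed if whenever `p, q ∈ F` have `p ∨ q < ∞`, then `p ∨ q ∈ F`. -/
def VeeClosed (Q : QLOGroup G) (F : Set G) : Prop :=
  ∀ p ∈ F, ∀ q ∈ F, ∀ s, Q.IsLub p q s → s ∈ F

/-- `F̄ = {∨A : A ⊆ F, A ≠ ∅, ∨A ≠ ∞}`. -/
def veeClosure (Q : QLOGroup G) (F : Set G) : Set G :=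
  {s | ∃ A ⊆ F, A.Nonempty ∧ Q.IsLubSet A s}

end QLOGroup

/-- A `P`-graph for a quasi-lattice ordered group `(G,P)`: a countable category with a
degree functor `d` into `P` satisfying the unique factorisation property.  Composition is
written in the path order of Raeburn-Sims: `comp μ ν` is defined when `s(μ) = r(ν)` (with
`src = s = dom` and `tgt = r = cod`), and `comp` is a total function whose axioms are only
imposed on composable pairs. -/
structure PGraph {G : Type u} [Group G] (Q : QLOGroup G) where
  Obj : Type
  Mor : Type
  countable_mor : Countable Mor
  src : Mor → Obj
  tgt : Mor → Obj
  ident : Obj → Mor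
  comp : Mor → Mor → Mor
  src_ident : ∀ v, src (ident v) = v
  tgt_ident : ∀ v, tgt (ident v) = v
  src_comp : ∀ μ ν, src μ = tgt ν → src (comp μ ν) = src ν
  tgt_comp : ∀ μ ν, src μ = tgt ν → tgt (comp μ ν) = tgt μ
  id_comp : ∀ μ, comp (ident (tgt μ)) μ = μ
  comp_id : ∀ μ, comp μ (ident (src μ)) = μ
  comp_assoc : ∀ μ ν ρ, src μ = tgt ν → src ν = tgt ρ →
    comp (comp μ ν) ρ = comp μ (comp ν ρ)
  d : Mor → G
  d_mem : ∀ μ, d μ ∈ Q.P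
  d_ident : ∀ v, d (ident v) = 1
  d_comp : ∀ μ ν, src μ = tgt ν → d (comp μ ν) = d μ * d ν
  factorisation : ∀ (lam : Mor) (p q : G), p ∈ Q.P → q ∈ Q.P → d lam = p * q →
    ∃! mn : Mor × Mor, src mn.1 = tgt mn.2 ∧ lam = comp mn.1 mn.2 ∧ d mn.1 = p ∧ d mn.2 = q

namespace PGraph

variable {G : Type u} [Group G] {Q : QLOGroup G} (Λ : PGraph Q)

/-- The prefix order: `λ ⪯ μ` iff `μ = λμ'` for some `μ'`. -/
def PrefixLe (lam mu : Λ.Mor) : Prop :=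
  ∃ tail, Λ.src lam = Λ.tgt tail ∧ mu = Λ.comp lam tail

/-- The set of minimal common extensions of `μ` and `ν`. -/
def MCE (mu nu : Λ.Mor) : Set Λ.Mor :=
  {lam | Λ.PrefixLe mu lam ∧ Λ.PrefixLe nu lam ∧ Q.IsLub (Λ.d mu) (Λ.d nu) (Λ.d lam)}

/-- `Λ` is finitely aligned if all the sets `MCE(μ,ν)` are finite. -/
def FinitelyAligned : Prop := ∀ mu nu : Λ.Mor, (Λ.MCE mu nu).Finite

/-- A filter of `Λ`: a nonempty subset that is downward closed (F1) and upward
directed (F2) for the prefix order. -/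
def IsGraphFilter (U : Set Λ.Mor) : Prop :=
  U.Nonempty ∧ (∀ mu ∈ U, ∀ lam, Λ.PrefixLe lam mu → lam ∈ U) ∧
    (∀ mu ∈ U, ∀ nu ∈ U, ∃ lam ∈ U, Λ.PrefixLe mu lam ∧ Λ.PrefixLe nu lam)

/-- An ultrafilter of `Λ`: a filter maximal under inclusion. -/
def IsGraphUltrafilter (U : Set Λ.Mor) : Prop :=
  Λ.IsGraphFilter U ∧ ∀ V, Λ.IsGraphFilter V → U ⊆ V → U = V

/-- `λ·U = ⋃_{μ ∈ U} {α : α ⪯ λμ}`. -/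
def actFwd (lam : Λ.Mor) (U : Set Λ.Mor) : Set Λ.Mor :=
  {a | ∃ mu ∈ U, Λ.PrefixLe a (Λ.comp lam mu)}

/-- `λ*·V = {μ : λμ ∈ V}`. -/
def actBwd (lam : Λ.Mor) (V : Set Λ.Mor) : Set Λ.Mor :=
  {mu | Λ.src lam = Λ.tgt mu ∧ Λ.comp lam mu ∈ V}

/-- `(μ,ν)` is a balanced pair: `s(μ) = s(ν)` and `d(μ) = d(ν)`. -/
def Balanced (mu nu : Λ.Mor) : Prop := Λ.src mu = Λ.src nu ∧ Λ.d mu = Λ.d nu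

/-- The pairs `(α,β)` with `να = ξβ ∈ MCE(ν,ξ)`. -/
def MCEpairs (nu xi : Λ.Mor) : Set (Λ.Mor × Λ.Mor) :=
  {p | Λ.src nu = Λ.tgt p.1 ∧ Λ.src xi = Λ.tgt p.2 ∧
    Λ.comp nu p.1 = Λ.comp xi p.2 ∧ Λ.comp nu p.1 ∈ Λ.MCE nu xi}

end PGraph

/-!
Left multiplication by `λ` is an order isomorphism from the filters containing `s(λ)` onto the
filters containing `λ`, with inverse `λ*·`: both maps preserve inclusion, and cancellation in
`Λ` makes them mutually inverse. An ultrafilter containing a given path is exactly a maximal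
element among the filters containing that path, since those filters form an up-set of filters,
and an order isomorphism preserves maximal elements.
-/

namespace PGraph

variable {G : Type u} [Group G] {Q : QLOGroup G} {Λ : PGraph Q}

theorem prefixLe_refl (a : Λ.Mor) : Λ.PrefixLe a a :=
  ⟨Λ.ident (Λ.src a), (Λ.tgt_ident _).symm, (Λ.comp_id a).symm⟩

theorem PrefixLe.tgt_eq {a b : Λ.Mor} (h : Λ.PrefixLe a b) : Λ.tgt b = Λ.tgt a := by
  obtain ⟨t, ht, rfl⟩ := h
  exact Λ.tgt_comp a t ht

theorem PrefixLe.trans {a b c : Λ.Mor} (hab : Λ.PrefixLe a b) (hbc : Λ.PrefixLe b c) :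
    Λ.PrefixLe a c := by
  obtain ⟨t, ht, rfl⟩ := hab
  obtain ⟨s, hs, rfl⟩ := hbc
  have hts : Λ.src t = Λ.tgt s := by rw [← Λ.src_comp a t ht, hs]
  exact ⟨Λ.comp t s, by rw [Λ.tgt_comp t s hts, ht], Λ.comp_assoc a t s ht hts⟩

/-- Paths are left cancellative: this is where unique factorisation enters. -/
theorem comp_left_cancel {lam mu nu : Λ.Mor} (hm : Λ.src lam = Λ.tgt mu)
    (hn : Λ.src lam = Λ.tgt nu) (h : Λ.comp lam mu = Λ.comp lam nu) : mu = nu := by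
  have hd : Λ.d nu = Λ.d mu :=
    mul_left_cancel ((Λ.d_comp lam nu hn).symm.trans (h ▸ Λ.d_comp lam mu hm))
  obtain ⟨_, _, huniq⟩ := Λ.factorisation (Λ.comp lam mu) (Λ.d lam) (Λ.d mu)
    (Λ.d_mem lam) (Λ.d_mem mu) (Λ.d_comp lam mu hm)
  have hmn : (lam, mu) = (lam, nu) :=
    (huniq (lam, mu) ⟨hm, rfl, rfl, rfl⟩).trans (huniq (lam, nu) ⟨hn, h, rfl, hd⟩).symm
  exact (Prod.ext_iff.1 hmn).2

theorem prefixLe_comp_comp_iff {lam mu nu : Λ.Mor} (hm : Λ.src lam = Λ.tgt mu)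
    (hn : Λ.src lam = Λ.tgt nu) :
    Λ.PrefixLe (Λ.comp lam mu) (Λ.comp lam nu) ↔ Λ.PrefixLe mu nu := by
  constructor
  · rintro ⟨t, ht, hc⟩
    have hmt : Λ.src mu = Λ.tgt t := by rw [← Λ.src_comp lam mu hm, ht]
    have hcomp : Λ.src lam = Λ.tgt (Λ.comp mu t) := by rw [Λ.tgt_comp mu t hmt, hm]
    refine ⟨t, hmt, comp_left_cancel hn hcomp ?_⟩
    rw [hc, Λ.comp_assoc lam mu t hm hmt]
  · rintro ⟨t, ht, rfl⟩
    exact ⟨t, by rw [Λ.src_comp lam mu hm, ht], by rw [Λ.comp_assoc lam mu t hm ht]⟩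

theorem IsGraphFilter.eq_tgt_of_ident_mem {U : Set Λ.Mor} (hU : Λ.IsGraphFilter U)
    {v : Λ.Obj} (hv : Λ.ident v ∈ U) {mu : Λ.Mor} (hmu : mu ∈ U) : v = Λ.tgt mu := by
  obtain ⟨xi, -, hmu_xi, hv_xi⟩ := hU.2.2 mu hmu (Λ.ident v) hv
  rw [← hmu_xi.tgt_eq, hv_xi.tgt_eq, Λ.tgt_ident]

variable (Λ) in
def filtersContaining (a : Λ.Mor) : Set (Set Λ.Mor) :=
  {U | Λ.IsGraphFilter U ∧ a ∈ U}

theorem isGraphUltrafilter_iff_maximal {U : Set Λ.Mor} {a : Λ.Mor} (ha : a ∈ U) :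
    Λ.IsGraphUltrafilter U ↔ Maximal (· ∈ Λ.filtersContaining a) U :=
  ⟨fun hU => ⟨⟨hU.1, ha⟩, fun V hV hUV => (hU.2 V hV.1 hUV).ge⟩,
    fun hU => ⟨hU.prop.1, fun _ hV hUV => hUV.antisymm (hU.2 ⟨hV, hUV ha⟩ hUV)⟩⟩

theorem actFwd_mono (lam : Λ.Mor) : Monotone (Λ.actFwd lam) := by
  rintro U W hUW a ⟨mu, hmu, ha⟩
  exact ⟨mu, hUW hmu, ha⟩

theorem actBwd_mono (lam : Λ.Mor) : Monotone (Λ.actBwd lam) := by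
  rintro U W hUW mu ⟨hm, hmu⟩
  exact ⟨hm, hUW hmu⟩

variable {lam : Λ.Mor}

theorem actFwd_mem_filtersContaining {U : Set Λ.Mor}
    (hU : U ∈ Λ.filtersContaining (Λ.ident (Λ.src lam))) :
    Λ.actFwd lam U ∈ Λ.filtersContaining lam := by
  obtain ⟨hF, hid⟩ := hU
  have hlam : lam ∈ Λ.actFwd lam U := ⟨_, hid, by rw [Λ.comp_id]; exact prefixLe_refl lam⟩
  refine ⟨⟨⟨lam, hlam⟩, ?_, ?_⟩, hlam⟩
  · rintro b ⟨mu, hmu, hb⟩ a ha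
    exact ⟨mu, hmu, ha.trans hb⟩
  · rintro a ⟨mu, hmu, ha⟩ b ⟨nu, hnu, hb⟩
    obtain ⟨xi, hxi, hmu_xi, hnu_xi⟩ := hF.2.2 mu hmu nu hnu
    have hsrc {rho : Λ.Mor} (h : rho ∈ U) := hF.eq_tgt_of_ident_mem hid h
    refine ⟨Λ.comp lam xi, ⟨xi, hxi, prefixLe_refl _⟩, ?_, ?_⟩
    · exact ha.trans ((prefixLe_comp_comp_iff (hsrc hmu) (hsrc hxi)).2 hmu_xi)
    · exact hb.trans ((prefixLe_comp_comp_iff (hsrc hnu) (hsrc hxi)).2 hnu_xi)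

theorem actBwd_mem_filtersContaining {V : Set Λ.Mor} (hV : V ∈ Λ.filtersContaining lam) :
    Λ.actBwd lam V ∈ Λ.filtersContaining (Λ.ident (Λ.src lam)) := by
  obtain ⟨hF, hlam⟩ := hV
  have hid : Λ.ident (Λ.src lam) ∈ Λ.actBwd lam V :=
    ⟨(Λ.tgt_ident _).symm, by rw [Λ.comp_id]; exact hlam⟩
  refine ⟨⟨⟨_, hid⟩, ?_, ?_⟩, hid⟩
  · rintro mu ⟨hm, hmu⟩ b ⟨t, ht, rfl⟩
    have hb : Λ.src lam = Λ.tgt b := by rw [hm, Λ.tgt_comp b t ht]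
    refine ⟨hb, hF.2.1 _ hmu _ ?_⟩
    exact (prefixLe_comp_comp_iff hb hm).2 ⟨t, ht, rfl⟩
  · rintro mu ⟨hm, hmu⟩ nu ⟨hn, hnu⟩
    obtain ⟨xi, hxi, ⟨t, ht, rfl⟩, hnu_xi⟩ := hF.2.2 _ hmu _ hnu
    have hmt : Λ.src mu = Λ.tgt t := by rw [← Λ.src_comp lam mu hm, ht]
    have hrho : Λ.src lam = Λ.tgt (Λ.comp mu t) := by rw [Λ.tgt_comp mu t hmt, hm]
    rw [Λ.comp_assoc lam mu t hm hmt] at hxi hnu_xi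
    exact ⟨Λ.comp mu t, ⟨hrho, hxi⟩, ⟨t, hmt, rfl⟩,
      (prefixLe_comp_comp_iff hn hrho).1 hnu_xi⟩

theorem actBwd_actFwd {U : Set Λ.Mor} (hU : U ∈ Λ.filtersContaining (Λ.ident (Λ.src lam))) :
    Λ.actBwd lam (Λ.actFwd lam U) = U := by
  obtain ⟨hF, hid⟩ := hU
  ext mu
  constructor
  · rintro ⟨hm, nu, hnu, hle⟩
    exact hF.2.1 nu hnu mu ((prefixLe_comp_comp_iff hm (hF.eq_tgt_of_ident_mem hid hnu)).1 hle)
  · intro hmu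
    exact ⟨hF.eq_tgt_of_ident_mem hid hmu, mu, hmu, prefixLe_refl _⟩

theorem actFwd_actBwd {V : Set Λ.Mor} (hV : V ∈ Λ.filtersContaining lam) :
    Λ.actFwd lam (Λ.actBwd lam V) = V := by
  obtain ⟨hF, hlam⟩ := hV
  ext a
  constructor
  · rintro ⟨mu, ⟨-, hmu⟩, hle⟩
    exact hF.2.1 _ hmu a hle
  · intro ha
    obtain ⟨xi, hxi, ⟨t, ht, rfl⟩, ha_xi⟩ := hF.2.2 lam hlam a ha
    exact ⟨t, ⟨ht, hxi⟩, ha_xi⟩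

theorem actFwd_subset_actFwd_iff {U W : Set Λ.Mor}
    (hU : U ∈ Λ.filtersContaining (Λ.ident (Λ.src lam)))
    (hW : W ∈ Λ.filtersContaining (Λ.ident (Λ.src lam))) :
    Λ.actFwd lam U ⊆ Λ.actFwd lam W ↔ U ⊆ W := by
  refine ⟨fun h => ?_, fun h => actFwd_mono lam h⟩
  rw [← actBwd_actFwd hU, ← actBwd_actFwd hW]
  exact actBwd_mono lam h

theorem image_actFwd_filtersContaining :
    Λ.actFwd lam '' Λ.filtersContaining (Λ.ident (Λ.src lam)) = Λ.filtersContaining lam := by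
  refine Set.Subset.antisymm ?_ fun V hV => ?_
  · rintro _ ⟨U, hU, rfl⟩
    exact actFwd_mem_filtersContaining hU
  · exact ⟨_, actBwd_mem_filtersContaining hV, actFwd_actBwd hV⟩

end PGraph

theorem stmt8_general {G : Type u} [Group G] {Q : QLOGroup G} (Λ : PGraph Q)
    (lam : Λ.Mor) :
    (∀ U : Set Λ.Mor, Λ.IsGraphUltrafilter U → Λ.ident (Λ.src lam) ∈ U →
      Λ.IsGraphUltrafilter (Λ.actFwd lam U)) ∧
    (∀ V : Set Λ.Mor, Λ.IsGraphUltrafilter V → lam ∈ V →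
      Λ.IsGraphUltrafilter (Λ.actBwd lam V)) := by
  have hFwd : ∀ ⦃U W⦄, U ∈ Λ.filtersContaining (Λ.ident (Λ.src lam)) →
      W ∈ Λ.filtersContaining (Λ.ident (Λ.src lam)) →
      (Λ.actFwd lam U ⊆ Λ.actFwd lam W ↔ U ⊆ W) :=
    fun _ _ => PGraph.actFwd_subset_actFwd_iff
  constructor
  · intro U hU hid
    have hlam := (PGraph.actFwd_mem_filtersContaining ⟨hU.1, hid⟩).2
    rw [PGraph.isGraphUltrafilter_iff_maximal hlam, ← PGraph.image_actFwd_filtersContaining]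
    exact maximal_mem_image_monotone hFwd ((PGraph.isGraphUltrafilter_iff_maximal hid).1 hU)
  · intro V hV hlam
    have hB := PGraph.actBwd_mem_filtersContaining ⟨hV.1, hlam⟩
    rw [PGraph.isGraphUltrafilter_iff_maximal hB.2, ← maximal_mem_image_monotone_iff hB hFwd,
      PGraph.image_actFwd_filtersContaining, PGraph.actFwd_actBwd ⟨hV.1, hlam⟩]
    exact (PGraph.isGraphUltrafilter_iff_maximal hlam).1 hV

/-- If `U` is an ultrafilter with `r(U) = s(λ)` then `λ·U` is an ultrafilter,
and if `V` is an ultrafilter containing `λ` then `λ*·V` is an ultrafilter. -/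
theorem stmt8 {G : Type u} [Group G] {Q : QLOGroup G} (Λ : PGraph Q)
    (hFA : Λ.FinitelyAligned) (lam : Λ.Mor) :
    (∀ U : Set Λ.Mor, Λ.IsGraphUltrafilter U → Λ.ident (Λ.src lam) ∈ U →
      Λ.IsGraphUltrafilter (Λ.actFwd lam U)) ∧
    (∀ V : Set Λ.Mor, Λ.IsGraphUltrafilter V → lam ∈ V →
      Λ.IsGraphUltrafilter (Λ.actBwd lam V)) :=
  stmt8_general Λ lam
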